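/- arXiv:1111.4729 — 7 statements merged into one kernel-verified Lean document; each statement's English description precedes it below -/
import Mathlib

section
/- An aperiodic signed directed graph cannot be both balanced and anti-balanced. -/
/-!
If `S` witnesses balance and `T` anti-balance, then, every edge sign being `±1`, each edge
crosses exactly one of the two bipartitions. Hence "`v ∈ S ↔ v ∈ T`" changes truth value along
every edge, so every closed walk has even length and `2` divides the period.
-/

open Matrix Filter Topology Finset

/-- A directed walk of given length in a digraph with edge relation `E`. -/
def DiWalk {V : Type*} (E : V → V → Prop) : ℕ → V → V → Prop
  | 0, i, j => i = j
  | n + 1, i, j => ∃ k, E i k ∧ DiWalk E n k j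

/-- Strong connectivity: every node reaches every other node by some walk. -/
def DiStronglyConnected {V : Type*} (E : V → V → Prop) : Prop :=
  ∀ i j : V, ∃ n : ℕ, DiWalk E n i j

/-- Aperiodicity: the gcd of the lengths of all (positive-length) closed walks is 1. -/
def DiAperiodic {V : Type*} (E : V → V → Prop) : Prop :=
  ∀ d : ℕ, (∀ n : ℕ, 0 < n → (∃ i, DiWalk E n i i) → d ∣ n) → d = 1

/-- A signed directed walk of given length and total sign `s` (product of edge signs). -/
def SWalk {V : Type*} (E : V → V → Prop) (σ : V → V → ℤ) : ℕ → ℤ → V → V → Prop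
  | 0, s, i, j => i = j ∧ s = 1
  | n + 1, s, i, j => ∃ k s', E i k ∧ SWalk E σ n s' k j ∧ s = σ i k * s'

/-- Balanced signed digraph: a bipartition with positive edges inside parts,
negative edges across. -/
def SBalancedG {V : Type*} (E : V → V → Prop) (σ : V → V → ℤ) : Prop :=
  ∃ S : Set V, ∀ i j, E i j → (σ i j = 1 ↔ (i ∈ S ↔ j ∈ S))

/-- Anti-balanced signed digraph: negative edges inside parts, positive edges across. -/
def SAntiBalancedG {V : Type*} (E : V → V → Prop) (σ : V → V → ℤ) : Prop :=
  ∃ S : Set V, ∀ i j, E i j → (σ i j = -1 ↔ (i ∈ S ↔ j ∈ S))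

section Bipartite

variable {V : Type*} {E : V → V → Prop} {c : V → Prop}

theorem DiWalk.even_iff_of_flip (hc : ∀ i j, E i j → ¬(c i ↔ c j)) :
    ∀ {n : ℕ} {i j : V}, DiWalk E n i j → (Even n ↔ (c i ↔ c j))
  | 0, i, j, hw => by
    obtain rfl : i = j := hw
    simp
  | n + 1, i, j, ⟨k, hik, hkj⟩ => by
    have hstep := hc i k hik
    have hrest := DiWalk.even_iff_of_flip hc hkj
    have hsucc : Even (n + 1) ↔ ¬Even n := Nat.even_add_one
    tauto

theorem DiWalk.even_of_flip (hc : ∀ i j, E i j → ¬(c i ↔ c j)) {n : ℕ} {i : V}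
    (hw : DiWalk E n i i) : Even n :=
  (hw.even_iff_of_flip hc).mpr Iff.rfl

theorem not_diAperiodic_of_flip (hc : ∀ i j, E i j → ¬(c i ↔ c j)) : ¬DiAperiodic E := by
  intro hap
  have h2 : (2 : ℕ) = 1 := hap 2 fun _ _ ⟨_, hw⟩ => (hw.even_of_flip hc).two_dvd
  omega

end Bipartite

theorem SBalancedG.exists_flip_of_sAntiBalancedG {V : Type*} {E : V → V → Prop}
    {σ : V → V → ℤ} (hσ : ∀ i j, E i j → σ i j = 1 ∨ σ i j = -1)
    (hbal : SBalancedG E σ) (hanti : SAntiBalancedG E σ) :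
    ∃ c : V → Prop, ∀ i j, E i j → ¬(c i ↔ c j) := by
  obtain ⟨S, hS⟩ := hbal
  obtain ⟨T, hT⟩ := hanti
  refine ⟨fun v => v ∈ S ↔ v ∈ T, fun i j hij => ?_⟩
  have hSij := hS i j hij
  have hTij := hT i j hij
  rcases hσ i j hij with h | h <;> simp only [h] at hSij hTij <;> norm_num at hSij hTij <;> tauto

/-- An aperiodic signed digraph cannot be both balanced and anti-balanced. -/
theorem aperiodic_not_balanced_and_antibalanced {V : Type*}
    (E : V → V → Prop) (σ : V → V → ℤ)
    (hσ : ∀ i j, E i j → σ i j = 1 ∨ σ i j = -1)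
    (hap : DiAperiodic E)
    (hbal : SBalancedG E σ) (hanti : SAntiBalancedG E σ) : False := by
  obtain ⟨c, hc⟩ := hbal.exists_flip_of_sAntiBalancedG hσ hanti
  exact not_diAperiodic_of_flip hc hap
end

section
/- If G is an ergodic signed digraph that is strictly unbalanced (neither balanced nor anti-balanced), then there exist two vertices i and j and two directed paths from i to j of the same length but opposite signs. -/
/-!
If no two walks of equal length and equal endpoints have opposite signs, the sign of a walk is a
function of its length and endpoints. Strong connectivity and aperiodicity make the lengths of
closed walks at a node `v` a submonoid of `ℕ` with gcd `1`, so it contains two consecutive lengths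
`x` and `x + 1`, with signs `s₁` and `s₂`. Then every closed walk at `v` of length `n` has sign
`eᵑ` with `e = s₁ s₂`, and fixing a return walk from every node to `v` yields `ε : V → {±1}` with
`σ i j = e · ε i · ε j` on every edge: for `e = 1` the graph is balanced, for `e = -1`
anti-balanced.
-/

open Matrix Filter Topology Finset

theorem exists_mem_and_add_one_mem_of_setGcd_eq_one (S : AddSubmonoid ℕ)
    (h : Nat.setGcd S = 1) : ∃ x ∈ S, x + 1 ∈ S := by
  obtain ⟨n, hn⟩ := Nat.exists_mem_closure_of_ge (S : Set ℕ)
  rw [AddSubmonoid.closure_eq, h] at hn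
  exact ⟨n, hn n le_rfl (one_dvd n), hn (n + 1) n.le_succ (one_dvd _)⟩

section Walks

variable {V : Type*} {E : V → V → Prop} {σ : V → V → ℤ}

theorem DiWalk.append {n m : ℕ} {i j k : V} (h₁ : DiWalk E n i j) (h₂ : DiWalk E m j k) :
    DiWalk E (n + m) i k := by
  induction n generalizing i with
  | zero => cases h₁; simpa using h₂
  | succ n ih =>
    obtain ⟨l, hl, hw⟩ := h₁
    rw [Nat.succ_add]
    exact ⟨l, hl, ih hw⟩

theorem DiWalk.exists_sWalk {n : ℕ} {i j : V} (h : DiWalk E n i j) : ∃ s, SWalk E σ n s i j := by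
  induction n generalizing i with
  | zero => exact ⟨1, h, rfl⟩
  | succ n ih =>
    obtain ⟨k, hk, hw⟩ := h
    obtain ⟨s, hs⟩ := ih hw
    exact ⟨σ i k * s, k, s, hk, hs, rfl⟩

theorem SWalk.isUnit (hσ : ∀ i j, E i j → σ i j = 1 ∨ σ i j = -1) {n : ℕ} {s : ℤ} {i j : V}
    (h : SWalk E σ n s i j) : IsUnit s := by
  induction n generalizing i s with
  | zero => exact h.2 ▸ isUnit_one
  | succ n ih =>
    obtain ⟨k, s', hk, hw, rfl⟩ := h
    exact (Int.isUnit_iff.mpr (hσ i k hk)).mul (ih hw)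

theorem SWalk.append {n m : ℕ} {s t : ℤ} {i j k : V} (h₁ : SWalk E σ n s i j)
    (h₂ : SWalk E σ m t j k) : SWalk E σ (n + m) (s * t) i k := by
  induction n generalizing i s with
  | zero => obtain ⟨rfl, rfl⟩ := h₁; simpa using h₂
  | succ n ih =>
    obtain ⟨l, s', hl, hw, rfl⟩ := h₁
    rw [Nat.succ_add]
    exact ⟨l, s' * t, hl, ih hw, by ring⟩

theorem SWalk.single {i j : V} (h : E i j) : SWalk E σ 1 (σ i j) i j :=
  ⟨j, 1, h, ⟨rfl, rfl⟩, (mul_one _).symm⟩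

theorem SWalk.pow {n : ℕ} {s : ℤ} {v : V} (h : SWalk E σ n s v v) (q : ℕ) :
    SWalk E σ (q * n) (s ^ q) v v := by
  induction q with
  | zero => rw [Nat.zero_mul, pow_zero]; exact ⟨rfl, rfl⟩
  | succ q ih => simpa [Nat.succ_mul, pow_succ] using ih.append h

end Walks

def closedWalkLengths {V : Type*} (E : V → V → Prop) (v : V) : AddSubmonoid ℕ where
  carrier := {n | DiWalk E n v v}
  add_mem' := DiWalk.append
  zero_mem' := rfl

def SignDeterminedByLength {V : Type*} (E : V → V → Prop) (σ : V → V → ℤ) : Prop :=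
  ∀ (n : ℕ) (s t : ℤ) (i j : V), SWalk E σ n s i j → SWalk E σ n t i j → s = t

section Switching

variable {V : Type*} {E : V → V → Prop} {σ : V → V → ℤ}

theorem setGcd_closedWalkLengths_eq_one (hsc : DiStronglyConnected E) (hap : DiAperiodic E)
    (v : V) : Nat.setGcd (closedWalkLengths E v) = 1 := by
  apply hap
  rintro n - ⟨i, hw⟩
  obtain ⟨α, hα⟩ := hsc v i
  obtain ⟨β, hβ⟩ := hsc i v
  have hround : Nat.setGcd (closedWalkLengths E v) ∣ α + β :=
    Nat.setGcd_dvd_of_mem (hα.append hβ)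
  have hdetour : Nat.setGcd (closedWalkLengths E v) ∣ α + β + n := by
    rw [show α + β + n = α + (n + β) by ring]
    exact Nat.setGcd_dvd_of_mem (hα.append (hw.append hβ))
  exact (Nat.dvd_add_right hround).mp hdetour

theorem sBalancedG_of_switching (ε : V → ℤ) (hε : ∀ i, IsUnit (ε i))
    (h : ∀ i j, E i j → σ i j = ε i * ε j) : SBalancedG E σ := by
  refine ⟨{i | ε i = 1}, fun i j hij => ?_⟩
  rcases Int.isUnit_iff.mp (hε i) with hi | hi <;> rcases Int.isUnit_iff.mp (hε j) with hj | hj <;>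
    simp [h i j hij, hi, hj]

theorem sAntiBalancedG_of_switching (ε : V → ℤ) (hε : ∀ i, IsUnit (ε i))
    (h : ∀ i j, E i j → σ i j = -(ε i * ε j)) : SAntiBalancedG E σ := by
  refine ⟨{i | ε i = 1}, fun i j hij => ?_⟩
  rcases Int.isUnit_iff.mp (hε i) with hi | hi <;> rcases Int.isUnit_iff.mp (hε j) with hj | hj <;>
    simp [h i j hij, hi, hj]

theorem sign_eq_pow_mul_of_closed {v i : V} {e : ℤ}
    (hclosed : ∀ n t, SWalk E σ n t v v → t = e ^ n) {r m : ℕ} {w t : ℤ}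
    (hw : SWalk E σ r w i v) (hwu : IsUnit w) (ht : SWalk E σ m t v i) :
    t = e ^ m * (e ^ r * w) := calc
  t = t * w * w := by rw [mul_assoc, Int.isUnit_mul_self hwu, mul_one]
  _ = e ^ (m + r) * w := by rw [hclosed _ _ (ht.append hw)]
  _ = e ^ m * (e ^ r * w) := by ring

theorem sign_edge_eq_of_switching {v i j : V} {e : ℤ} (he : IsUnit e) {ε : V → ℤ}
    (hεi : IsUnit (ε i))
    (hfwd : ∀ k m t, SWalk E σ m t v k → t = e ^ m * ε k) {m : ℕ} {t : ℤ}
    (ht : SWalk E σ m t v i) (hij : E i j) : σ i j = e * (ε i * ε j) := by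
  have hstep := hfwd j _ _ (ht.append (SWalk.single hij))
  rw [hfwd i m t ht, pow_succ] at hstep
  have hcancel : ε i * σ i j = e * ε j :=
    (he.pow m).mul_left_cancel (by rw [← mul_assoc, hstep]; ring)
  calc σ i j = ε i * (ε i * σ i j) := by rw [← mul_assoc, Int.isUnit_mul_self hεi, one_mul]
    _ = e * (ε i * ε j) := by rw [hcancel]; ring

theorem signDeterminedByLength_of_not_exists
    (hσ : ∀ i j, E i j → σ i j = 1 ∨ σ i j = -1)
    (h : ¬ ∃ (i j : V) (n : ℕ), SWalk E σ n 1 i j ∧ SWalk E σ n (-1) i j) :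
    SignDeterminedByLength E σ := by
  intro n s t i j hs ht
  rcases Int.isUnit_iff.mp (hs.isUnit hσ) with rfl | rfl <;>
    rcases Int.isUnit_iff.mp (ht.isUnit hσ) with rfl | rfl
  exacts [rfl, (h ⟨i, j, n, hs, ht⟩).elim, (h ⟨i, j, n, ht, hs⟩).elim, rfl]

namespace SignDeterminedByLength

/-- Appending `w₁ ^ n` gives a walk of the same length `n * (x + 1)` as `w₂ ^ n`. -/
theorem sign_closed_eq_pow (hdet : SignDeterminedByLength E σ) {v : V} {x n : ℕ}
    {s₁ s₂ t : ℤ} (w₁ : SWalk E σ x s₁ v v) (hs₁ : IsUnit s₁) (w₂ : SWalk E σ (x + 1) s₂ v v)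
    (ht : SWalk E σ n t v v) : t = (s₁ * s₂) ^ n := by
  have hlong : SWalk E σ (n * (x + 1)) (t * s₁ ^ n) v v := by
    simpa [mul_add, add_comm] using ht.append (w₁.pow n)
  have hcmp : t * s₁ ^ n = s₂ ^ n := hdet _ _ _ _ _ hlong (w₂.pow n)
  calc t = t * (s₁ * s₁) ^ n := by rw [Int.isUnit_mul_self hs₁, one_pow, mul_one]
    _ = s₂ ^ n * s₁ ^ n := by rw [← hcmp, mul_pow]; ring
    _ = (s₁ * s₂) ^ n := by ring

theorem exists_switching (hdet : SignDeterminedByLength E σ)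
    (hσ : ∀ i j, E i j → σ i j = 1 ∨ σ i j = -1) (hsc : DiStronglyConnected E) {v : V} {x : ℕ}
    (hx : x ∈ closedWalkLengths E v) (hx₁ : x + 1 ∈ closedWalkLengths E v) :
    ∃ e : ℤ, IsUnit e ∧ ∃ ε : V → ℤ, (∀ i, IsUnit (ε i)) ∧
      ∀ i j, E i j → σ i j = e * (ε i * ε j) := by
  obtain ⟨s₁, w₁⟩ := DiWalk.exists_sWalk (σ := σ) hx
  obtain ⟨s₂, w₂⟩ := DiWalk.exists_sWalk (σ := σ) hx₁
  set e := s₁ * s₂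
  have he : IsUnit e := (w₁.isUnit hσ).mul (w₂.isUnit hσ)
  have hclosed : ∀ n t, SWalk E σ n t v v → t = e ^ n := fun _ _ =>
    hdet.sign_closed_eq_pow w₁ (w₁.isUnit hσ) w₂
  have hret : ∀ i, ∃ (r : ℕ) (w : ℤ), SWalk E σ r w i v := fun i =>
    let ⟨r, hr⟩ := hsc i v
    let ⟨w, hw⟩ := hr.exists_sWalk (σ := σ)
    ⟨r, w, hw⟩
  choose r w hw using hret
  let ε : V → ℤ := fun i => e ^ r i * w i
  have hε : ∀ i, IsUnit (ε i) := fun i => (he.pow _).mul ((hw i).isUnit hσ)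
  refine ⟨e, he, ε, hε, fun i j hij => ?_⟩
  obtain ⟨m, hm⟩ := hsc v i
  obtain ⟨t, ht⟩ := hm.exists_sWalk (σ := σ)
  exact sign_edge_eq_of_switching he (hε i)
    (fun k _ _ h => sign_eq_pow_mul_of_closed hclosed (hw k) ((hw k).isUnit hσ) h) ht hij

end SignDeterminedByLength

end Switching

/-- In an ergodic strictly unbalanced signed digraph there exist two nodes and
two directed paths between them of the same length but opposite signs. -/
theorem strictly_unbalanced_equal_length_opposite_signs {V : Type*}
    (E : V → V → Prop) (σ : V → V → ℤ)
    (hσ : ∀ i j, E i j → σ i j = 1 ∨ σ i j = -1)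
    (hsc : DiStronglyConnected E) (hap : DiAperiodic E)
    (hnb : ¬ SBalancedG E σ) (hna : ¬ SAntiBalancedG E σ) :
    ∃ (i j : V) (n : ℕ), SWalk E σ n 1 i j ∧ SWalk E σ n (-1) i j := by
  by_contra hcon
  have hdet := signDeterminedByLength_of_not_exists hσ hcon
  obtain ⟨v⟩ : Nonempty V := not_isEmpty_iff.mp fun _ => hnb ⟨∅, fun i => isEmptyElim i⟩
  obtain ⟨x, hx, hx₁⟩ := exists_mem_and_add_one_mem_of_setGcd_eq_one _
    (setGcd_closedWalkLengths_eq_one hsc hap v)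
  obtain ⟨e, he, ε, hε, hedge⟩ := hdet.exists_switching hσ hsc hx hx₁
  rcases Int.isUnit_iff.mp he with rfl | rfl
  · exact hnb (sBalancedG_of_switching ε hε fun i j hij => by simpa using hedge i j hij)
  · exact hna (sAntiBalancedG_of_switching ε hε fun i j hij => by simpa using hedge i j hij)
end

section
/- Suppose G is an ergodic signed digraph in which, for every pair of vertices i, j, all directed paths from i to j of even length have the same sign. Then G is either balanced or anti-balanced. -/
open Matrix Filter Topology Finset

/-! Root everything at a vertex `r` carrying an odd closed walk `C` of sign `ε`, which exists by
aperiodicity. Prefixing `C` turns odd walks from `r` into even ones, so all odd walks from `r` to `j`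
share one sign as well. If `p j` is the sign of some even walk from `r` to `j`, then for an edge
`i → j` the odd walks "even walk to `i`, then the edge" and "`C`, then even walk to `j`" give
`p i * σ i j = ε * p j`: the vertices with `p = 1` form a balancing set if `ε = 1` and an
anti-balancing set if `ε = -1`. -/

namespace SWalk

variable {V : Type*} {E : V → V → Prop} {σ : V → V → ℤ}

theorem of_diWalk (σ : V → V → ℤ) :
    ∀ {n : ℕ} {i j : V}, DiWalk E n i j → ∃ s, SWalk E σ n s i j
  | 0, _, _, h => ⟨1, h, rfl⟩
  | _ + 1, i, _, ⟨k, hik, hw⟩ =>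
    let ⟨s, hs⟩ := of_diWalk σ hw
    ⟨σ i k * s, k, s, hik, hs, rfl⟩

theorem single_s3 {i j : V} (h : E i j) : SWalk E σ 1 (σ i j) i j :=
  ⟨j, 1, h, ⟨rfl, rfl⟩, (mul_one _).symm⟩

theorem append_s3 :
    ∀ {n m : ℕ} {s t : ℤ} {i j k : V},
      SWalk E σ n s i j → SWalk E σ m t j k → SWalk E σ (n + m) (s * t) i k
  | 0, _, _, _, _, _, _, ⟨rfl, rfl⟩, h => by simpa using h
  | n + 1, _, _, _, _, _, _, ⟨k', s', hik, hw, hs⟩, h => by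
    rw [Nat.add_right_comm]
    exact ⟨k', s' * _, hik, append_s3 hw h, by rw [hs, mul_assoc]⟩

theorem sign_eq_one_or_neg_one (hσ : ∀ i j, E i j → σ i j = 1 ∨ σ i j = -1) :
    ∀ {n : ℕ} {s : ℤ} {i j : V}, SWalk E σ n s i j → s = 1 ∨ s = -1
  | 0, _, _, _, ⟨_, hs⟩ => Or.inl hs
  | _ + 1, _, i, _, ⟨k, _, hik, hw, rfl⟩ => by
    rcases hσ i k hik with h | h <;> rcases sign_eq_one_or_neg_one hσ hw with h' | h' <;>
      simp [h, h']

end SWalk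

theorem DiAperiodic.exists_odd_closed_walk {V : Type*} {E : V → V → Prop} (hap : DiAperiodic E) :
    ∃ n r, Odd n ∧ DiWalk E n r r := by
  by_contra! h
  have := hap 2 fun n _ ⟨r, hr⟩ => even_iff_two_dvd.mp (Nat.not_odd_iff_even.mp (h n r · hr))
  omega

section OddClosedWalk

variable {V : Type*} {E : V → V → Prop} {σ : V → V → ℤ} {r : V} {c : ℕ} {ε : ℤ}

theorem exists_even_swalk_of_odd_closed (hsc : DiStronglyConnected E)
    (hC : SWalk E σ c ε r r) (hc : Odd c) (j : V) :
    ∃ n s, Even n ∧ SWalk E σ n s r j := by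
  obtain ⟨a, ha⟩ := hsc r j
  obtain ⟨s, hs⟩ := SWalk.of_diWalk σ ha
  rcases Nat.even_or_odd a with ha_even | ha_odd
  · exact ⟨a, s, ha_even, hs⟩
  · exact ⟨c + a, _, hc.add_odd ha_odd, hC.append_s3 hs⟩

theorem odd_swalk_sign_eq_of_odd_closed (hσ : ∀ i j, E i j → σ i j = 1 ∨ σ i j = -1)
    (heven : ∀ (i j : V) (n m : ℕ) (s s' : ℤ), 0 < n → 0 < m → Even n → Even m →
      SWalk E σ n s i j → SWalk E σ m s' i j → s = s')
    (hC : SWalk E σ c ε r r) (hc : Odd c) {j : V} {n m : ℕ} {s t : ℤ}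
    (hn : Odd n) (hm : Odd m) (hs : SWalk E σ n s r j) (ht : SWalk E σ m t r j) : s = t := by
  have hε : ε ≠ 0 := by rcases hC.sign_eq_one_or_neg_one hσ with rfl | rfl <;> norm_num
  have hc_pos := hc.pos
  exact mul_left_cancel₀ hε <| heven r j (c + n) (c + m) _ _ (by omega) (by omega)
    (hc.add_odd hn) (hc.add_odd hm) (hC.append_s3 hs) (hC.append_s3 ht)

end OddClosedWalk

section Potential

variable {V : Type*} {E : V → V → Prop} {σ : V → V → ℤ} {p : V → ℤ}

theorem sBalancedG_of_potential (hp : ∀ i, p i = 1 ∨ p i = -1)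
    (h : ∀ i j, E i j → p i * σ i j = p j) : SBalancedG E σ := by
  refine ⟨{i | p i = 1}, fun i j hij => ?_⟩
  have := h i j hij
  rcases hp i with hi | hi <;> rcases hp j with hj | hj <;> simp [hi, hj] at this ⊢ <;> omega

theorem sAntiBalancedG_of_potential (hp : ∀ i, p i = 1 ∨ p i = -1)
    (h : ∀ i j, E i j → p i * σ i j = -p j) : SAntiBalancedG E σ := by
  refine ⟨{i | p i = 1}, fun i j hij => ?_⟩
  have := h i j hij
  rcases hp i with hi | hi <;> rcases hp j with hj | hj <;> simp [hi, hj] at this ⊢ <;> omega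

end Potential

/-- If in an ergodic signed digraph, for every pair of vertices all even-length
paths between them have the same sign, then the graph is balanced or anti-balanced. -/
theorem even_paths_same_sign_imp_balanced_or_antibalanced {V : Type*}
    (E : V → V → Prop) (σ : V → V → ℤ)
    (hσ : ∀ i j, E i j → σ i j = 1 ∨ σ i j = -1)
    (hsc : DiStronglyConnected E) (hap : DiAperiodic E)
    (heven : ∀ (i j : V) (n m : ℕ) (s s' : ℤ), 0 < n → 0 < m → Even n → Even m →
      SWalk E σ n s i j → SWalk E σ m s' i j → s = s') :
    SBalancedG E σ ∨ SAntiBalancedG E σ := by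
  obtain ⟨c, r, hc, hCr⟩ := hap.exists_odd_closed_walk
  obtain ⟨ε, hC⟩ := SWalk.of_diWalk σ hCr
  choose n p hn_even hU using exists_even_swalk_of_odd_closed hsc hC hc
  have hp : ∀ i, p i = 1 ∨ p i = -1 := fun i => (hU i).sign_eq_one_or_neg_one hσ
  have hedge : ∀ i j, E i j → p i * σ i j = ε * p j := fun i j hij =>
    odd_swalk_sign_eq_of_odd_closed hσ heven hC hc ((hn_even i).add_one) (hc.add_even (hn_even j))
      ((hU i).append_s3 (SWalk.single_s3 hij)) (hC.append_s3 (hU j))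
  rcases hC.sign_eq_one_or_neg_one hσ with rfl | rfl
  · exact Or.inl (sBalancedG_of_potential hp fun i j hij => by simpa using hedge i j hij)
  · exact Or.inr (sAntiBalancedG_of_potential hp fun i j hij => by simpa using hedge i j hij)
end

section
/- If G is an ergodic strictly unbalanced signed digraph with signed transition matrix P = D^{-1}A, then lim_{t→∞} P^t = 0. -/
/-!
Write `|X|` for the entrywise absolute value of a matrix. The entry `(|P| ^ t) i j` is the total
weight of the walks of length `t` from `i` to `j`, and `(P ^ t) i j` is the same sum with signs, so
`|(P ^ t) i j| < (|P| ^ t) i j` exactly when two such walks have opposite signs. Ergodicity makes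
some power `|P| ^ s` entrywise positive (aperiodicity enters through the numerical semigroup of
closed-walk lengths), and `‖P‖ ≤ ‖|P|‖ ≤ 1` for the `ℓ∞` operator norm.

If no cancellation ever occurs, the sign of `(P ^ t) i j` is multiplicative under concatenation of
walks; comparing `P ^ (2s+1) = P ^ s * P ^ (s+1) = P ^ (s+1) * P ^ s` at a base node `v` gives
`sign (P i j) = c * ε i * ε j` with `ε i = sign ((P ^ s) v i)`, so the graph is balanced (`c = 1`)
or anti-balanced (`c = -1`). Otherwise one cancellation, spread over all rows by the positive
matrix `|P| ^ s`, gives `‖P ^ (s + t)‖ < 1`, and the powers of `P` decay geometrically.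
-/

open Matrix Filter Topology Finset

/-- Weighted out-degree `d_i = Σ_j |A_{ij}|` of a signed weighted digraph. -/
noncomputable def sdeg {V : Type*} [Fintype V] (A : Matrix V V ℝ) (i : V) : ℝ :=
  ∑ j, |A i j|

/-- The signed transition matrix `P = D⁻¹A`. -/
noncomputable def signedP {V : Type*} [Fintype V] (A : Matrix V V ℝ) : Matrix V V ℝ :=
  Matrix.of fun i j => A i j / sdeg A i

/-- The unsigned transition matrix `P̄ = D⁻¹|A|`. -/
noncomputable def unsignedP {V : Type*} [Fintype V] (A : Matrix V V ℝ) : Matrix V V ℝ :=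
  Matrix.of fun i j => |A i j| / sdeg A i

/-- The vector `g⁻ = D⁻¹A⁻1` of weighted fractions of outgoing negative edges. -/
noncomputable def gneg {V : Type*} [Fintype V] (A : Matrix V V ℝ) (i : V) : ℝ :=
  (∑ j, max (-(A i j)) 0) / sdeg A i

/-- Ergodicity of the underlying (unsigned) digraph of a weighted signed digraph. -/
def SErgodic {V : Type*} (A : Matrix V V ℝ) : Prop :=
  DiStronglyConnected (fun i j => A i j ≠ 0) ∧ DiAperiodic (fun i j => A i j ≠ 0)

/-- Balanced weighted signed digraph. -/
def SBalancedM {V : Type*} (A : Matrix V V ℝ) : Prop :=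
  ∃ S : Set V, ∀ i j, A i j ≠ 0 → (0 < A i j ↔ (i ∈ S ↔ j ∈ S))

/-- Anti-balanced weighted signed digraph. -/
def SAntiBalancedM {V : Type*} (A : Matrix V V ℝ) : Prop :=
  ∃ S : Set V, ∀ i j, A i j ≠ 0 → (A i j < 0 ↔ (i ∈ S ↔ j ∈ S))

/-- `π` is a stationary distribution of the unsigned chain `P̄ = D⁻¹|A|`. -/
def SStationary {V : Type*} [Fintype V] (A : Matrix V V ℝ) (π : V → ℝ) : Prop :=
  (∀ i, 0 ≤ π i) ∧ (∑ i, π i = 1) ∧ ∀ j, ∑ i, π i * unsignedP A i j = π j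

open scoped Matrix.Norms.Operator
open SignType (sign)

theorem Finset.sign_eq_sign_sum_of_abs_sum_eq {ι G : Type*} [AddCommGroup G] [LinearOrder G]
    [IsOrderedAddMonoid G] {s : Finset ι} {f : ι → G} (h : |∑ i ∈ s, f i| = ∑ i ∈ s, |f i|)
    {i : ι} (hi : i ∈ s) (hfi : f i ≠ 0) :
    sign (f i) = sign (∑ j ∈ s, f j) := by
  rcases hfi.lt_or_gt with hneg | hpos
  · have hS : ∑ j ∈ s, f j < 0 := by
      by_contra! hS
      have : ∑ j ∈ s, f j < ∑ j ∈ s, |f j| :=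
        Finset.sum_lt_sum (fun j _ => le_abs_self _) ⟨i, hi, by rw [abs_of_neg hneg]; simpa⟩
      rw [← h, abs_of_nonneg hS] at this
      exact lt_irrefl _ this
    rw [sign_neg hneg, sign_neg hS]
  · have hS : 0 < ∑ j ∈ s, f j := by
      by_contra! hS
      have : ∑ j ∈ s, -f j < ∑ j ∈ s, |f j| :=
        Finset.sum_lt_sum (fun j _ => neg_le_abs _) ⟨i, hi, by rw [abs_of_pos hpos]; simpa⟩
      rw [← h, abs_of_nonpos hS, Finset.sum_neg_distrib] at this
      exact lt_irrefl _ this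
    rw [sign_pos hpos, sign_pos hS]

theorem Nat.eventually_mem_of_setGcd_eq_one {S : AddSubmonoid ℕ} (h : Nat.setGcd S = 1) :
    ∀ᶠ n in atTop, n ∈ S := by
  obtain ⟨N, hN⟩ := Nat.exists_mem_closure_of_ge (S : Set ℕ)
  exact eventually_atTop.2 ⟨N, fun n hn => by simpa using hN n hn (h ▸ one_dvd n)⟩

theorem tendsto_pow_atTop_nhds_zero_of_norm_pow_lt_one {R : Type*} [SeminormedRing R]
    [NormOneClass R] {x : R} (h : ‖x‖ ≤ 1) {T : ℕ} (hT : ‖x ^ T‖ < 1) :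
    Tendsto (fun n : ℕ ↦ x ^ n) atTop (𝓝 0) := by
  have hT₀ : T ≠ 0 := by rintro rfl; simp at hT
  refine squeeze_zero_norm (fun n => ?_) ((tendsto_pow_atTop_nhds_zero_of_lt_one (norm_nonneg _)
    hT).comp (Nat.tendsto_div_const_atTop hT₀))
  calc ‖x ^ n‖ = ‖(x ^ T) ^ (n / T) * x ^ (n % T)‖ := by
        rw [← pow_mul, ← pow_add, Nat.div_add_mod]
    _ ≤ ‖x ^ T‖ ^ (n / T) * ‖x‖ ^ (n % T) :=
      (norm_mul_le _ _).trans (mul_le_mul (norm_pow_le _ _) (norm_pow_le _ _) (norm_nonneg _)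
        (by positivity))
    _ ≤ ‖x ^ T‖ ^ (n / T) := mul_le_of_le_one_right (by positivity) (pow_le_one₀ (norm_nonneg _) h)

namespace Matrix

section LinftyOpNorm

variable {m n : Type*} [Fintype m] [Fintype n]

theorem linfty_opNorm_le_iff {X : Matrix m n ℝ} {c : ℝ} (hc : 0 ≤ c) :
    ‖X‖ ≤ c ↔ ∀ i, ∑ j, |X i j| ≤ c := by
  lift c to NNReal using hc
  rw [linfty_opNorm_def, NNReal.coe_le_coe, Finset.sup_le_iff]
  simp only [Finset.mem_univ, forall_const, ← NNReal.coe_le_coe, NNReal.coe_sum, coe_nnnorm,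
    Real.norm_eq_abs]

theorem linfty_opNorm_lt_iff {X : Matrix m n ℝ} {c : ℝ} (hc : 0 < c) :
    ‖X‖ < c ↔ ∀ i, ∑ j, |X i j| < c := by
  lift c to NNReal using hc.le
  rw [linfty_opNorm_def, NNReal.coe_lt_coe, Finset.sup_lt_iff (by exact_mod_cast hc)]
  simp only [Finset.mem_univ, forall_const, ← NNReal.coe_lt_coe, NNReal.coe_sum, coe_nnnorm,
    Real.norm_eq_abs]

theorem linfty_opNorm_map_abs (X : Matrix m n ℝ) : ‖X.map abs‖ = ‖X‖ := by
  simp [linfty_opNorm_def]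

theorem linfty_opNorm_mul_lt_of_abs_apply_le [Nonempty m] {X X' : Matrix m n ℝ}
    {Y Y' : Matrix n m ℝ} (hX : ∀ i j, |X i j| ≤ X' i j) (hY : ∀ i j, |Y i j| ≤ Y' i j)
    {i₀ : n} {j₀ : m} (hX' : ∀ k, 0 < X' k i₀) (hY₀ : |Y i₀ j₀| < Y' i₀ j₀) :
    ‖X * Y‖ < ‖X'‖ * ‖Y'‖ := by
  have hX'₀ (k : m) (l : n) : 0 ≤ X' k l := (abs_nonneg _).trans (hX k l)
  have hrowY (l : n) : ∑ j, |Y l j| ≤ ‖Y'‖ :=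
    (Finset.sum_le_sum fun j _ => (hY l j).trans (le_abs_self _)).trans
      ((linfty_opNorm_le_iff (norm_nonneg _)).1 le_rfl l)
  have hrowY₀ : ∑ j, |Y i₀ j| < ‖Y'‖ :=
    (Finset.sum_lt_sum (fun j _ => (hY i₀ j).trans (le_abs_self _))
      ⟨j₀, Finset.mem_univ _, hY₀.trans_le (le_abs_self _)⟩).trans_le
      ((linfty_opNorm_le_iff (norm_nonneg _)).1 le_rfl i₀)
  have hrow (k : m) : ∑ j, |(X * Y) k j| < ‖X'‖ * ‖Y'‖ :=
    calc ∑ j, |(X * Y) k j| ≤ ∑ j, ∑ l, X' k l * |Y l j| :=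
          Finset.sum_le_sum fun j _ => (Finset.abs_sum_le_sum_abs _ _).trans
            (Finset.sum_le_sum fun l _ => by
              rw [abs_mul]; exact mul_le_mul_of_nonneg_right (hX k l) (abs_nonneg _))
      _ = ∑ l, X' k l * ∑ j, |Y l j| := by rw [Finset.sum_comm]; simp_rw [Finset.mul_sum]
      _ < ∑ l, |X' k l| * ‖Y'‖ :=
          Finset.sum_lt_sum (fun l _ => by
              rw [abs_of_nonneg (hX'₀ k l)]
              exact mul_le_mul_of_nonneg_left (hrowY l) (hX'₀ k l))
            ⟨i₀, Finset.mem_univ _, by rw [abs_of_pos (hX' k)]; gcongr; exact hX' k⟩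
      _ ≤ ‖X'‖ * ‖Y'‖ := by
          rw [← Finset.sum_mul]
          exact mul_le_mul_of_nonneg_right ((linfty_opNorm_le_iff (norm_nonneg _)).1 le_rfl k)
            (norm_nonneg _)
  obtain ⟨k⟩ := ‹Nonempty m›
  exact (linfty_opNorm_lt_iff ((Finset.sum_nonneg fun j _ => abs_nonneg _).trans_lt
    (hrow k))).2 hrow

end LinftyOpNorm

variable {V : Type*} [Fintype V] [DecidableEq V]

section Nonneg

variable {R : Type*} [Semiring R] [PartialOrder R] [IsStrictOrderedRing R] {M : Matrix V V R}

theorem pow_add_apply_pos (hM : ∀ i j, 0 ≤ M i j) {a b : ℕ} {i j k : V}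
    (hij : 0 < (M ^ a) i j) (hjk : 0 < (M ^ b) j k) : 0 < (M ^ (a + b)) i k := by
  rw [pow_add, mul_apply]
  exact (mul_pos hij hjk).trans_le <|
    Finset.single_le_sum (f := fun l => (M ^ a) i l * (M ^ b) l k)
      (fun l _ => mul_nonneg (pow_apply_nonneg hM a i l) (pow_apply_nonneg hM b l k))
      (Finset.mem_univ j)

theorem pow_apply_pos_of_diWalk (hM : ∀ i j, 0 ≤ M i j) {E : V → V → Prop}
    (hE : ∀ i j, E i j → 0 < M i j) : ∀ {n : ℕ} {i j : V}, DiWalk E n i j → 0 < (M ^ n) i j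
  | 0, i, _, rfl => by simp
  | n + 1, i, j, ⟨k, hik, hkj⟩ => by
    rw [add_comm]
    exact pow_add_apply_pos hM (by rw [pow_one]; exact hE i k hik)
      (pow_apply_pos_of_diWalk hM hE hkj)

theorem eventually_pow_apply_pos (hM : ∀ i j, 0 ≤ M i j) {E : V → V → Prop}
    (hE : ∀ i j, E i j → 0 < M i j) (hconn : DiStronglyConnected E) (haper : DiAperiodic E) :
    ∀ᶠ n in atTop, ∀ i j, 0 < (M ^ n) i j := by
  have walk (i j : V) : ∃ n, 0 < (M ^ n) i j :=
    (hconn i j).imp fun _ => pow_apply_pos_of_diWalk hM hE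
  have closed (v : V) : ∀ᶠ n in atTop, 0 < (M ^ n) v v := by
    let S : AddSubmonoid ℕ :=
      { carrier := {n | 0 < (M ^ n) v v}
        zero_mem' := by simp
        add_mem' := pow_add_apply_pos hM }
    refine Nat.eventually_mem_of_setGcd_eq_one (S := S) (haper _ fun n _ ⟨i, hi⟩ => ?_)
    obtain ⟨p, hp⟩ := walk v i
    obtain ⟨q, hq⟩ := walk i v
    have hpq : Nat.setGcd S ∣ p + q := Nat.setGcd_dvd_of_mem (pow_add_apply_pos hM hp hq)
    have hpnq : Nat.setGcd S ∣ p + n + q := Nat.setGcd_dvd_of_mem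
      (pow_add_apply_pos hM (pow_add_apply_pos hM hp (pow_apply_pos_of_diWalk hM hE hi)) hq)
    rw [add_right_comm] at hpnq
    exact (Nat.dvd_add_right hpq).1 hpnq
  simp only [eventually_all]
  intro i j
  obtain ⟨b, hb⟩ := walk i j
  filter_upwards [(tendsto_sub_atTop_nat b).eventually (closed i), eventually_ge_atTop b]
    with n hn hbn
  simpa [Nat.sub_add_cancel hbn] using pow_add_apply_pos hM hn hb

end Nonneg

section Sign

variable {R : Type*} [Ring R] [LinearOrder R] [IsStrictOrderedRing R]

theorem abs_pow_apply_le (X : Matrix V V R) (n : ℕ) (i j : V) :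
    |(X ^ n) i j| ≤ ((X.map abs) ^ n) i j := by
  induction n generalizing j with
  | zero => rw [pow_zero, pow_zero, one_apply]; split_ifs <;> simp
  | succ n ih =>
    rw [pow_succ, pow_succ, mul_apply, mul_apply]
    refine (Finset.abs_sum_le_sum_abs _ _).trans (Finset.sum_le_sum fun k _ => ?_)
    rw [abs_mul]
    exact mul_le_mul_of_nonneg_right (ih k) (abs_nonneg _)

theorem sign_pow_add_apply {X : Matrix V V R}
    (hX : ∀ t i j, |(X ^ t) i j| = ((X.map abs) ^ t) i j) {a b : ℕ} {i j k : V}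
    (hij : (X ^ a) i j ≠ 0) (hjk : (X ^ b) j k ≠ 0) :
    sign ((X ^ (a + b)) i k) = sign ((X ^ a) i j) * sign ((X ^ b) j k) := by
  have hsum : |∑ l, (X ^ a) i l * (X ^ b) l k| = ∑ l, |(X ^ a) i l * (X ^ b) l k| := by
    simp only [abs_mul, hX, ← mul_apply, ← pow_add]
  rw [← sign_mul, pow_add, mul_apply]
  exact (Finset.sign_eq_sign_sum_of_abs_sum_eq hsum (Finset.mem_univ j) (mul_ne_zero hij hjk)).symm

theorem sign_pow_apply_mul_sign_apply {X : Matrix V V R}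
    (hX : ∀ t i j, |(X ^ t) i j| = ((X.map abs) ^ t) i j) {s : ℕ}
    (hs : ∀ i j, (X ^ s) i j ≠ 0) (hs' : ∀ i j, (X ^ (s + 1)) i j ≠ 0) (v : V) {i j : V}
    (hij : X i j ≠ 0) :
    sign ((X ^ s) v i) * sign (X i j) =
      sign ((X ^ s) v v) * sign ((X ^ (s + 1)) v v) * sign ((X ^ s) v j) := by
  have hvj : sign ((X ^ (s + 1)) v j) = sign ((X ^ s) v i) * sign (X i j) := by
    simpa using sign_pow_add_apply hX (b := 1) (hs v i) (by rwa [pow_one])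
  have hvvj : sign ((X ^ s) v v) * sign ((X ^ (s + 1)) v j) =
      sign ((X ^ (s + 1)) v v) * sign ((X ^ s) v j) := by
    rw [← sign_pow_add_apply hX (hs v v) (hs' v j), ← sign_pow_add_apply hX (hs' v v) (hs v j),
      add_comm]
  have hvv : sign ((X ^ s) v v) * sign ((X ^ s) v v) = 1 := by
    rw [← sign_mul, sign_pos (mul_self_pos.2 (hs v v))]
  calc sign ((X ^ s) v i) * sign (X i j) = sign ((X ^ (s + 1)) v j) := hvj.symm
    _ = sign ((X ^ s) v v) * sign ((X ^ s) v v) * sign ((X ^ (s + 1)) v j) := by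
      rw [hvv, one_mul]
    _ = sign ((X ^ s) v v) * sign ((X ^ (s + 1)) v v) * sign ((X ^ s) v j) := by
      rw [mul_assoc, hvvj, mul_assoc]

end Sign

end Matrix

section SignedDigraph

variable {V : Type*}

theorem sBalancedM_congr_sign {A B : Matrix V V ℝ} (h : ∀ i j, sign (A i j) = sign (B i j)) :
    SBalancedM A ↔ SBalancedM B := by
  have hne (i j : V) : A i j ≠ 0 ↔ B i j ≠ 0 := by rw [← sign_ne_zero, h, sign_ne_zero]
  have hpos (i j : V) : 0 < A i j ↔ 0 < B i j := by rw [← sign_eq_one_iff, h, sign_eq_one_iff]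
  simp only [SBalancedM, hne, hpos]

theorem sAntiBalancedM_congr_sign {A B : Matrix V V ℝ} (h : ∀ i j, sign (A i j) = sign (B i j)) :
    SAntiBalancedM A ↔ SAntiBalancedM B := by
  have hne (i j : V) : A i j ≠ 0 ↔ B i j ≠ 0 := by rw [← sign_ne_zero, h, sign_ne_zero]
  have hneg (i j : V) : A i j < 0 ↔ B i j < 0 := by
    rw [← sign_eq_neg_one_iff, h, sign_eq_neg_one_iff]
  simp only [SAntiBalancedM, hne, hneg]

theorem sBalancedM_or_sAntiBalancedM_of_sign (A : Matrix V V ℝ) (ε : V → SignType)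
    (hε : ∀ i, ε i ≠ 0) {c : SignType} (hc : c ≠ 0)
    (h : ∀ i j, A i j ≠ 0 → ε i * sign (A i j) = c * ε j) :
    SBalancedM A ∨ SAntiBalancedM A := by
  have key : ∀ c a x y : SignType, c ≠ 0 → x ≠ 0 → y ≠ 0 → x * a = c * y →
      (a = c ↔ (x = 1 ↔ y = 1)) := by decide
  have hS (i j : V) (hij : A i j ≠ 0) : sign (A i j) = c ↔ (ε i = 1 ↔ ε j = 1) :=
    key c _ _ _ hc (hε i) (hε j) (h i j hij)
  obtain rfl | rfl : c = 1 ∨ c = -1 :=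
    (by decide : ∀ c : SignType, c ≠ 0 → c = 1 ∨ c = -1) c hc
  · exact .inl ⟨{i | ε i = 1}, fun i j hij => sign_eq_one_iff.symm.trans (hS i j hij)⟩
  · exact .inr ⟨{i | ε i = 1}, fun i j hij => sign_eq_neg_one_iff.symm.trans (hS i j hij)⟩

theorem exists_abs_pow_apply_lt_of_not_balanced [Fintype V] [DecidableEq V] (X : Matrix V V ℝ)
    {s : ℕ} (hs : ∀ i j, 0 < ((X.map abs) ^ s) i j) (hs' : ∀ i j, 0 < ((X.map abs) ^ (s + 1)) i j)
    (hnb : ¬ SBalancedM X) (hna : ¬ SAntiBalancedM X) :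
    ∃ t i j, |(X ^ t) i j| < ((X.map abs) ^ t) i j := by
  by_contra! hX
  replace hX (t : ℕ) (i j : V) : |(X ^ t) i j| = ((X.map abs) ^ t) i j :=
    (abs_pow_apply_le X t i j).antisymm (hX t i j)
  have hne {t : ℕ} (ht : ∀ i j, 0 < ((X.map abs) ^ t) i j) (i j : V) : (X ^ t) i j ≠ 0 :=
    abs_pos.1 ((hX t i j).symm ▸ ht i j)
  rcases isEmpty_or_nonempty V with hV | ⟨⟨v⟩⟩
  · exact hnb ⟨∅, fun i => isEmptyElim i⟩
  rcases sBalancedM_or_sAntiBalancedM_of_sign X (fun i => sign ((X ^ s) v i))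
    (fun i => sign_ne_zero.2 (hne hs v i))
    (mul_ne_zero (sign_ne_zero.2 (hne hs v v)) (sign_ne_zero.2 (hne hs' v v)))
    (fun i j => sign_pow_apply_mul_sign_apply hX (hne hs) (hne hs') v) with h | h
  exacts [hnb h, hna h]

end SignedDigraph

section TransitionMatrix

variable {V : Type*} [Fintype V] (A : Matrix V V ℝ)

theorem abs_apply_le_sdeg (i j : V) : |A i j| ≤ sdeg A i :=
  Finset.single_le_sum (f := fun k => |A i k|) (fun _ _ => abs_nonneg _) (Finset.mem_univ j)

theorem sdeg_nonneg (i : V) : 0 ≤ sdeg A i :=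
  Finset.sum_nonneg fun k _ => abs_nonneg (A i k)

theorem sign_signedP_apply (i j : V) : sign (signedP A i j) = sign (A i j) := by
  rcases (sdeg_nonneg A i).eq_or_lt with hd | hd
  · have hA : A i j = 0 := abs_nonpos_iff.1 (hd ▸ abs_apply_le_sdeg A i j)
    simp [signedP, hA]
  · rw [signedP, of_apply, div_eq_mul_inv, sign_mul, sign_pos (inv_pos.2 hd), mul_one]

theorem signedP_apply_ne_zero_iff (i j : V) : signedP A i j ≠ 0 ↔ A i j ≠ 0 := by
  rw [← sign_ne_zero, sign_signedP_apply, sign_ne_zero]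

theorem norm_signedP_le_one : ‖signedP A‖ ≤ 1 := by
  refine (Matrix.linfty_opNorm_le_iff zero_le_one).2 fun i => ?_
  simp only [signedP, of_apply, abs_div, abs_of_nonneg (sdeg_nonneg A i), ← Finset.sum_div]
  exact div_self_le_one (sdeg A i)

end TransitionMatrix

/-- For an ergodic strictly unbalanced signed digraph, `P^t → 0`. -/
theorem strictly_unbalanced_powers_tendsto_zero {V : Type*} [Fintype V] [DecidableEq V]
    (A : Matrix V V ℝ)
    (herg : SErgodic A)
    (hnb : ¬ SBalancedM A) (hna : ¬ SAntiBalancedM A) :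
    Tendsto (fun t => signedP A ^ t) atTop (nhds 0) := by
  set P := signedP A
  have hedge (i j : V) (hij : A i j ≠ 0) : 0 < P.map abs i j :=
    abs_pos.2 ((signedP_apply_ne_zero_iff A i j).2 hij)
  obtain ⟨s, hs⟩ := (eventually_pow_apply_pos (fun i j => abs_nonneg (P i j)) hedge
    herg.1 herg.2).exists_forall_of_atTop
  obtain ⟨t, i, j, hcancel⟩ := exists_abs_pow_apply_lt_of_not_balanced P (hs s le_rfl)
    (hs (s + 1) s.le_succ) ((sBalancedM_congr_sign (sign_signedP_apply A)).not.2 hnb)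
    ((sAntiBalancedM_congr_sign (sign_signedP_apply A)).not.2 hna)
  have : Nonempty V := ⟨i⟩
  have hP : ‖P‖ ≤ 1 := norm_signedP_le_one A
  have hpow (n : ℕ) : ‖P.map abs ^ n‖ ≤ 1 :=
    (norm_pow_le _ n).trans (pow_le_one₀ (norm_nonneg _) ((linfty_opNorm_map_abs P).trans_le hP))
  refine tendsto_pow_atTop_nhds_zero_of_norm_pow_lt_one hP (T := s + t) ?_
  calc ‖P ^ (s + t)‖ = ‖P ^ s * P ^ t‖ := by rw [pow_add]
    _ < ‖P.map abs ^ s‖ * ‖P.map abs ^ t‖ :=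
      linfty_opNorm_mul_lt_of_abs_apply_le (abs_pow_apply_le P s) (abs_pow_apply_le P t)
        (fun k => hs s le_rfl k i) hcancel
    _ ≤ 1 := mul_le_one₀ (hpow s) (norm_nonneg _) (hpow t)
end

section
/- Let G=(V,E,A) be a signed digraph and G'=(V,E,-A) the digraph with all edge signs negated. For any initial white-color distribution x_0 and any even step 2t, the voter model distributions on G and G' coincide: x_{2t}(G) = x_{2t}(G'). -/
open Matrix Filter Topology Finset

/-!
Write `F v = P v + g` and `G v = -P v + g'` for the two one-step maps and `σ v = 1 - v` for
swapping colours. Since the rows of `P` sum to `g' - g` and `g + g' = 1`, one has `G = σ ∘ F` and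
`G ∘ σ = F`, hence `G ∘ G = G ∘ σ ∘ F = F ∘ F`: two steps on the negated digraph are two steps
on the original one.
-/

theorem Function.iterate_two_eq_of_eq_comp {α : Type*} {f g σ : α → α}
    (hg : g = σ ∘ f) (hgσ : g ∘ σ = f) : g^[2] = f^[2] := by
  calc g^[2] = g ∘ g := rfl
    _ = (g ∘ σ) ∘ f := by rw [hg]; rfl
    _ = f^[2] := by rw [hgσ]; rfl

theorem eq_iterate_of_forall_succ_eq {α : Type*} {f : α → α} {x : ℕ → α}
    (hx : ∀ t, x (t + 1) = f (x t)) (t : ℕ) : x t = f^[t] (x 0) := by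
  induction t with
  | zero => rfl
  | succ t ih => rw [hx, ih, Function.iterate_succ_apply']

section AffineStep

variable {R V : Type*} [CommRing R] [Fintype V] {P : Matrix V V R} {g g' : V → R}

theorem one_sub_mulVec_add_eq_neg_mulVec_add (hgg' : g + g' = 1) (v : V → R) :
    1 - (P *ᵥ v + g) = (-P) *ᵥ v + g' := by
  rw [neg_mulVec, ← hgg']
  abel

theorem neg_mulVec_one_sub_add_eq_mulVec_add (hP : P *ᵥ 1 = g' - g) (v : V → R) :
    (-P) *ᵥ (1 - v) + g' = P *ᵥ v + g := by
  rw [neg_mulVec, mulVec_sub, hP]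
  abel

end AffineStep

section SignedDigraph

variable {V : Type*} [Fintype V] {Apos Aneg : Matrix V V ℝ} {d g g' : V → ℝ}

theorem voter_offsets_add_eq_one (hd : ∀ i, d i = ∑ j, (Apos i j + Aneg i j))
    (hdpos : ∀ i, 0 < d i) (hg : ∀ i, g i = (∑ j, Aneg i j) / d i)
    (hg' : ∀ i, g' i = (∑ j, Apos i j) / d i) : g + g' = 1 := by
  funext i
  rw [Pi.add_apply, hg, hg', ← add_div, add_comm, ← sum_add_distrib, ← hd,
    div_self (hdpos i).ne', Pi.one_apply]

theorem voter_mulVec_one {P : Matrix V V ℝ} (hP : ∀ i j, P i j = (Apos i j - Aneg i j) / d i)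
    (hg : ∀ i, g i = (∑ j, Aneg i j) / d i) (hg' : ∀ i, g' i = (∑ j, Apos i j) / d i) :
    P *ᵥ 1 = g' - g := by
  funext i
  rw [Pi.sub_apply, hg, hg', div_sub_div_same, ← sum_sub_distrib, sum_div]
  simp only [mulVec, dotProduct, Pi.one_apply, mul_one, hP]

end SignedDigraph

theorem voter_model_sign_negation_even_steps_general {V : Type*} [Fintype V]
    (Apos Aneg : Matrix V V ℝ)
    (d : V → ℝ) (hd : ∀ i, d i = ∑ j, (Apos i j + Aneg i j)) (hdpos : ∀ i, 0 < d i)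
    (P : Matrix V V ℝ) (hP : ∀ i j, P i j = (Apos i j - Aneg i j) / d i)
    (g g' : V → ℝ) (hg : ∀ i, g i = (∑ j, Aneg i j) / d i)
    (hg' : ∀ i, g' i = (∑ j, Apos i j) / d i)
    (x y : ℕ → V → ℝ) (h0 : y 0 = x 0)
    (hx : ∀ t, x (t + 1) = P.mulVec (x t) + g)
    (hy : ∀ t, y (t + 1) = (-P).mulVec (y t) + g') :
    ∀ t, y (2 * t) = x (2 * t) := by
  have hgg' := voter_offsets_add_eq_one hd hdpos hg hg'
  have hP1 := voter_mulVec_one hP hg hg'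
  have htwo : (fun v => (-P) *ᵥ v + g')^[2] = (fun v => P *ᵥ v + g)^[2] :=
    Function.iterate_two_eq_of_eq_comp (σ := fun v => 1 - v)
      (funext fun v => (one_sub_mulVec_add_eq_neg_mulVec_add hgg' v).symm)
      (funext (neg_mulVec_one_sub_add_eq_mulVec_add hP1))
  intro t
  rw [eq_iterate_of_forall_succ_eq (f := fun v => P *ᵥ v + g) hx,
    eq_iterate_of_forall_succ_eq (f := fun v => (-P) *ᵥ v + g') hy, h0,
    Function.iterate_mul, Function.iterate_mul, htwo]

/-- Negating all edge signs leaves the voter-model distribution unchanged at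
every even step. -/
theorem voter_model_sign_negation_even_steps {V : Type*} [Fintype V] [DecidableEq V]
    (Apos Aneg : Matrix V V ℝ)
    (hpos : ∀ i j, 0 ≤ Apos i j) (hneg : ∀ i j, 0 ≤ Aneg i j)
    (d : V → ℝ) (hd : ∀ i, d i = ∑ j, (Apos i j + Aneg i j)) (hdpos : ∀ i, 0 < d i)
    (P : Matrix V V ℝ) (hP : ∀ i j, P i j = (Apos i j - Aneg i j) / d i)
    (g g' : V → ℝ) (hg : ∀ i, g i = (∑ j, Aneg i j) / d i)
    (hg' : ∀ i, g' i = (∑ j, Apos i j) / d i)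
    (x y : ℕ → V → ℝ) (h0 : y 0 = x 0)
    (hx : ∀ t, x (t + 1) = P.mulVec (x t) + g)
    (hy : ∀ t, y (t + 1) = (-P).mulVec (y t) + g') :
    ∀ t, y (2 * t) = x (2 * t) :=
  voter_model_sign_negation_even_steps_general Apos Aneg d hd hdpos P hP g g' hg hg' x y h0 hx hy
end

section
/- Let X ∈ R^{m×m}, Y ∈ R^{m×n}, Z ∈ R^{n×n} with lim_{t→∞} X^t = 0 and lim_{t→∞} Z^t = 0. Then lim_{t→∞} Σ_{i=0}^{t-1} X^i Y Z^{t-1-i} = 0. -/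
/-!
If `a ^ t → 0` in a normed ring then some power has `‖a ^ N‖ < 1`, and writing `t = qN + s`
gives `‖a ^ t‖ ≤ ‖a ^ N‖ ^ q ‖a ^ s‖`, so `∑ ‖a ^ t‖` converges. With any submultiplicative
matrix norm, the norm of `∑_{i+j=t} X^i Y Z^j` is at most `‖Y‖` times the `t`-th term of the
Cauchy product of the two convergent series `∑ ‖X^i‖` and `∑ ‖Z^j‖`; that product converges,
so its terms tend to zero.
-/

open Matrix Filter Topology Finset

theorem norm_pow_mul_le {R : Type*} [SeminormedRing R] (b c : R) (q : ℕ) :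
    ‖b ^ q * c‖ ≤ ‖b‖ ^ q * ‖c‖ := by
  induction q with
  | zero => simp
  | succ q ih =>
    calc ‖b ^ (q + 1) * c‖ = ‖b * (b ^ q * c)‖ := by rw [pow_succ', mul_assoc]
      _ ≤ ‖b‖ * (‖b‖ ^ q * ‖c‖) := norm_mul_le_of_le le_rfl ih
      _ = ‖b‖ ^ (q + 1) * ‖c‖ := by ring

theorem summable_norm_pow_of_tendsto_pow_zero {R : Type*} [SeminormedRing R] {a : R}
    (ha : Tendsto (a ^ ·) atTop (𝓝 0)) : Summable fun t => ‖a ^ t‖ := by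
  obtain ⟨N, hN, hN0⟩ := ((tendsto_zero_iff_norm_tendsto_zero.mp ha).eventually
    (eventually_lt_nhds zero_lt_one) |>.and (eventually_gt_atTop 0)).exists
  have : NeZero N := ⟨hN0.ne'⟩
  have hmajorant : Summable fun p : ℕ × Fin N => ‖a ^ N‖ ^ p.1 * ‖a ^ (p.2 : ℕ)‖ :=
    (summable_geometric_of_lt_one (norm_nonneg _) hN).mul_of_nonneg
      (Summable.of_finite (f := fun s : Fin N => ‖a ^ (s : ℕ)‖))
      (fun _ => by positivity) (fun _ => norm_nonneg _)
  refine (Nat.divModEquiv N).symm.summable_iff.mp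
    (hmajorant.of_nonneg_of_le (fun _ => norm_nonneg _) fun p => ?_)
  simpa only [Function.comp_apply, Nat.divModEquiv_symm_apply, pow_add, mul_comm p.1, pow_mul]
    using norm_pow_mul_le (a ^ N) (a ^ (p.2 : ℕ)) p.1

theorem tendsto_sum_range_mul_sub_of_summable {f g : ℕ → ℝ} (hf : Summable f) (hg : Summable g)
    (hf₀ : 0 ≤ f) (hg₀ : 0 ≤ g) :
    Tendsto (fun t => ∑ i ∈ range (t + 1), f i * g (t - i)) atTop (𝓝 0) :=
  (summable_sum_mul_range_of_summable_mul (hf.mul_of_nonneg hg hf₀ hg₀)).tendsto_atTop_zero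

-- The ℓ∞ operator norm induces the entrywise topology, in which `hX` and `hZ` are stated.
attribute [local instance] Matrix.linftyOpNormedRing Matrix.linftyOpNormedAddCommGroup

theorem norm_sum_pow_mul_mul_pow_le {l o α : Type*} [Fintype l] [Fintype o] [DecidableEq l]
    [DecidableEq o] [NormedRing α] (X : Matrix l l α) (Y : Matrix l o α) (Z : Matrix o o α)
    (t : ℕ) :
    ‖∑ i ∈ range (t + 1), X ^ i * Y * Z ^ (t - i)‖ ≤
      ‖Y‖ * ∑ i ∈ range (t + 1), ‖X ^ i‖ * ‖Z ^ (t - i)‖ := by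
  rw [mul_sum]
  refine (norm_sum_le _ _).trans (sum_le_sum fun i _ => ?_)
  calc ‖X ^ i * Y * Z ^ (t - i)‖ ≤ ‖X ^ i‖ * ‖Y‖ * ‖Z ^ (t - i)‖ :=
        (linfty_opNorm_mul _ _).trans
          (mul_le_mul_of_nonneg_right (linfty_opNorm_mul _ _) (norm_nonneg _))
    _ = ‖Y‖ * (‖X ^ i‖ * ‖Z ^ (t - i)‖) := by ring

/-- If `X^t → 0` and `Z^t → 0`, then `Σ_{i=0}^{t-1} X^i Y Z^{t-1-i} → 0`. -/
theorem mixed_power_series_tendsto_zero {m n : ℕ}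
    (X : Matrix (Fin m) (Fin m) ℝ) (Y : Matrix (Fin m) (Fin n) ℝ)
    (Z : Matrix (Fin n) (Fin n) ℝ)
    (hX : Tendsto (fun t => X ^ t) atTop (nhds 0))
    (hZ : Tendsto (fun t => Z ^ t) atTop (nhds 0)) :
    Tendsto (fun t => ∑ i ∈ Finset.range t, X ^ i * Y * Z ^ (t - 1 - i)) atTop
      (nhds 0) := by
  have hcauchy := tendsto_sum_range_mul_sub_of_summable
    (summable_norm_pow_of_tendsto_pow_zero hX) (summable_norm_pow_of_tendsto_pow_zero hZ)
    (fun i => norm_nonneg (X ^ i)) (fun j => norm_nonneg (Z ^ j))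
  rw [← tendsto_add_atTop_iff_nat 1]
  simp only [Nat.add_sub_cancel]
  exact squeeze_zero_norm (norm_sum_pow_mul_mul_pow_le X Y Z)
    (by simpa only [mul_zero] using hcauchy.const_mul ‖Y‖)
end

section
/- If G is a balanced ergodic signed digraph with partition S, S̄, then the two polarized states (all of S white and all of S̄ black, or all of S black and all of S̄ white) are fixed points (equilibrium states) of the voter model dynamic x ↦ P x + g^-. -/
open Matrix Filter Topology Finset

/-!
A polarized state `x = 𝟙_S` is a fixed point because, row by row, `A i j * x j + (A i j)⁻`
equals `x i * |A i j|` on a balanced graph: an edge inside a part contributes its positive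
weight through `A x`, an edge across the parts contributes its negative weight through `g⁻`,
and both land exactly where `x i = 1`. Summing over `j` and dividing by `d_i`, which is
positive because an ergodic digraph has no sinks, gives `x i`.
-/

theorem DiWalk.exists_edge_of_pos {V : Type*} {E : V → V → Prop} :
    ∀ {n : ℕ} {i j : V}, DiWalk E n i j → 0 < n → ∃ k, E i k
  | _ + 1, _, _, ⟨k, hk, _⟩, _ => ⟨k, hk⟩

theorem DiAperiodic.exists_closed_walk {V : Type*} {E : V → V → Prop} (h : DiAperiodic E) :
    ∃ n, 0 < n ∧ ∃ v, DiWalk E n v v := by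
  by_contra! hnone
  -- with no closed walks the divisibility condition is vacuous, so `d = 2` would qualify
  have := h 2 fun n hn ⟨v, hv⟩ => absurd hv (hnone n hn v)
  omega

theorem exists_edge_of_stronglyConnected_of_aperiodic {V : Type*} {E : V → V → Prop}
    (hsc : DiStronglyConnected E) (hap : DiAperiodic E) (i : V) : ∃ j, E i j := by
  obtain ⟨n, hn, v, hcycle⟩ := hap.exists_closed_walk
  obtain ⟨m, hpath⟩ := hsc i v
  rcases m.eq_zero_or_pos with rfl | hm
  · obtain rfl : i = v := hpath
    exact hcycle.exists_edge_of_pos hn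
  · exact hpath.exists_edge_of_pos hm

theorem SErgodic.exists_ne_zero {V : Type*} {A : Matrix V V ℝ} (herg : SErgodic A) (i : V) :
    ∃ j, A i j ≠ 0 :=
  exists_edge_of_stronglyConnected_of_aperiodic herg.1 herg.2 i

theorem sdeg_pos_of_ne_zero {V : Type*} [Fintype V] {A : Matrix V V ℝ} {i j : V}
    (hij : A i j ≠ 0) : 0 < sdeg A i :=
  (abs_pos.2 hij).trans_le (single_le_sum (fun k _ => abs_nonneg (A i k)) (mem_univ j))

noncomputable def voterMap {V : Type*} [Fintype V] (A : Matrix V V ℝ) (x : V → ℝ) : V → ℝ :=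
  signedP A *ᵥ x + gneg A

theorem voterMap_apply {V : Type*} [Fintype V] (A : Matrix V V ℝ) (x : V → ℝ) (i : V) :
    voterMap A x i = (∑ j, (A i j * x j + max (-A i j) 0)) / sdeg A i := by
  simp only [voterMap, Pi.add_apply, mulVec, dotProduct, signedP, of_apply, gneg,
    sum_add_distrib, add_div, sum_div, div_mul_eq_mul_div]

theorem mul_ite_add_max_neg_eq_ite_mul_abs (a : ℝ) (P Q : Prop) [Decidable P] [Decidable Q]
    (h : a ≠ 0 → (0 < a ↔ (P ↔ Q))) :
    a * (if Q then 1 else 0) + max (-a) 0 = (if P then 1 else 0) * |a| := by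
  split_ifs <;> grind [abs_of_nonneg, abs_of_nonpos]

theorem isFixedPt_voterMap_of_balanced {V : Type*} [Fintype V] {A : Matrix V V ℝ}
    (hsink : ∀ i, ∃ j, A i j ≠ 0) (P : V → Prop) [DecidablePred P]
    (hbal : ∀ i j, A i j ≠ 0 → (0 < A i j ↔ (P i ↔ P j))) :
    Function.IsFixedPt (voterMap A) fun i => if P i then 1 else 0 := by
  funext i
  obtain ⟨j, hij⟩ := hsink i
  have hrow : ∑ k, (A i k * (if P k then 1 else 0) + max (-A i k) 0)
      = (if P i then 1 else 0) * sdeg A i := by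
    rw [sdeg, mul_sum]
    exact sum_congr rfl fun k _ => mul_ite_add_max_neg_eq_ite_mul_abs _ _ _ (hbal i k)
  rw [voterMap_apply, hrow, mul_div_cancel_right₀ _ (sdeg_pos_of_ne_zero hij).ne']

/-- In a balanced ergodic signed digraph the two polarized states are fixed
points of the voter model map `x ↦ Px + g⁻`. -/
theorem balanced_polarized_states_are_fixed_points {V : Type*} [Fintype V] [DecidableEq V]
    (A : Matrix V V ℝ) (S : Finset V)
    (herg : SErgodic A)
    (hbal : ∀ i j, A i j ≠ 0 → (0 < A i j ↔ (i ∈ S ↔ j ∈ S))) :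
    ((signedP A).mulVec (fun i => if i ∈ S then (1 : ℝ) else 0) + gneg A
        = fun i => if i ∈ S then (1 : ℝ) else 0) ∧
    ((signedP A).mulVec (fun i => if i ∈ S then (0 : ℝ) else 1) + gneg A
        = fun i => if i ∈ S then (0 : ℝ) else 1) := by
  have hsink := herg.exists_ne_zero
  have hcompl := isFixedPt_voterMap_of_balanced hsink (· ∉ S)
    fun i j hij => (hbal i j hij).trans not_iff_not.symm
  simp only [ite_not] at hcompl
  exact ⟨isFixedPt_voterMap_of_balanced hsink (· ∈ S) hbal, hcompl⟩
end
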